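/- arXiv:2311.15886 — 6 statements merged into one kernel-verified Lean document; each statement's English description precedes it below -/
import Mathlib

section
/- Let I' ⊆ R = 𝒪⟦X_0,…,X_m⟧ be the ideal generated by the elements X_0 − X_i − u_i·X_0·X_i (for 1 ≤ i ≤ m) and X_0·X_1⋯X_m − u·π, where the u_i are arbitrary elements of R and u is an arbitrary unit of R. Then for every i with 1 ≤ i ≤ m there exists a one-variable formal power series f_i ∈ 𝒪⟦X⟧ with f_i ∈ X + X²·𝒪⟦X⟧ (i.e. f_i has constant coefficient 0 and coefficient of X equal to 1) such that X_i − f_i(X_0) ∈ I', where f_i(X_0) denotes the substitution of the power series X_0 ∈ R into f_i. -/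
open MvPowerSeries

/-- The ideal `I'` of `R = 𝒪⟦X_0, …, X_m⟧` generated by the elements
`X_0 − X_i − u_i·X_0·X_i` (for `1 ≤ i ≤ m`) and `X_0·X_1⋯X_m − u·π`. -/
noncomputable def pencilIdeal {𝒪 : Type*} [CommRing 𝒪] (π : 𝒪) (m : ℕ)
    (ui : Fin (m + 1) → MvPowerSeries (Fin (m + 1)) 𝒪)
    (u : (MvPowerSeries (Fin (m + 1)) 𝒪)ˣ) : Ideal (MvPowerSeries (Fin (m + 1)) 𝒪) :=
  Ideal.span
    ({g | ∃ i : Fin (m + 1), i ≠ 0 ∧ g = X 0 - X i - ui i * (X 0 * X i)} ∪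
      {(∏ i : Fin (m + 1), X i) - (u : MvPowerSeries (Fin (m + 1)) 𝒪) * C π})

/-- Substitution of the variable `X_0` into a one-variable formal power series `f`:
the result is `Σ_n f_n · X_0^n`, i.e. the multivariate power series whose coefficient at the
monomial `X_0^n` is the `n`-th coefficient of `f` and whose other coefficients vanish. -/
noncomputable def substX0 {𝒪 : Type*} [CommRing 𝒪] (m : ℕ) (f : PowerSeries 𝒪) :
    MvPowerSeries (Fin (m + 1)) 𝒪 :=
  fun d : Fin (m + 1) →₀ ℕ =>
    if d = Finsupp.single 0 (d 0) then PowerSeries.coeff (d 0) f else 0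

namespace PencilAux

variable {𝒪 : Type*} [CommRing 𝒪] {m : ℕ}

/-- smallest variable occurring in `d` -/
noncomputable def nu (d : Fin (m + 1) →₀ ℕ) : WithBot (Fin (m + 1)) := d.support.min

/-- the "`j`-th slice" of a power series -/
noncomputable def comp (j : Fin (m + 1)) (r : MvPowerSeries (Fin (m + 1)) 𝒪) :
    MvPowerSeries (Fin (m + 1)) 𝒪 :=
  fun d => if nu (d + Finsupp.single j 1) = (j : WithBot (Fin (m + 1)))
    then r (d + Finsupp.single j 1) else 0

lemma coeff_comp (j : Fin (m + 1)) (r : MvPowerSeries (Fin (m + 1)) 𝒪) (d : Fin (m + 1) →₀ ℕ) :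
    coeff d (comp j r) = if nu (d + Finsupp.single j 1) = (j : WithBot (Fin (m + 1)))
      then coeff (d + Finsupp.single j 1) r else 0 := rfl

lemma decomp (r : MvPowerSeries (Fin (m + 1)) 𝒪) :
    r = C (constantCoeff r)
      + ∑ j : Fin (m + 1), X j * comp j r := by
  ext d
  rw [map_add, coeff_C, map_sum]
  have hterm : ∀ j : Fin (m + 1), coeff d (X j * comp j r)
      = if Finsupp.single j 1 ≤ d ∧ nu d = (j : WithBot (Fin (m + 1)))
        then coeff d r else 0 := by
    intro j
    rw [X_def, coeff_monomial_mul]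
    by_cases h1 : Finsupp.single j 1 ≤ d
    · rw [if_pos h1, one_mul, coeff_comp, tsub_add_cancel_of_le h1]
      by_cases h2 : nu d = (j : WithBot (Fin (m + 1)))
      · rw [if_pos h2, if_pos ⟨h1, h2⟩]
      · rw [if_neg h2, if_neg (by tauto)]
    · rw [if_neg h1, if_neg (by tauto)]
  simp only [hterm]
  by_cases hd : d = 0
  · subst hd
    rw [if_pos rfl]
    have : ∀ j : Fin (m + 1), ¬ (Finsupp.single j 1 ≤ (0 : Fin (m + 1) →₀ ℕ)
        ∧ nu (0 : Fin (m + 1) →₀ ℕ) = (j : WithBot (Fin (m + 1)))) := by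
      intro j h
      have := Finsupp.single_le_iff.mp h.1
      simp at this
    simp only [this, if_false, Finset.sum_const_zero, add_zero]
    rfl
  · rw [if_neg hd, zero_add]
    have hne : d.support.Nonempty := Finsupp.support_nonempty_iff.mpr hd
    set j0 := d.support.min' hne with hj0
    have hmin : nu d = (j0 : WithBot (Fin (m + 1))) := (Finset.coe_min' hne).symm
    have hj0mem : j0 ∈ d.support := Finset.min'_mem _ hne
    rw [Finset.sum_eq_single j0]
    · rw [if_pos ⟨Finsupp.single_le_iff.mpr (Nat.one_le_iff_ne_zero.mpr
        (Finsupp.mem_support_iff.mp hj0mem)), hmin⟩]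
    · intro j _ hj
      rw [if_neg]
      rintro ⟨-, h2⟩
      exact hj (by exact_mod_cast h2.symm.trans hmin)
    · intro h; exact absurd (Finset.mem_univ j0) h

lemma coeff_substX0 (f : PowerSeries 𝒪) (d : Fin (m + 1) →₀ ℕ) :
    coeff d (substX0 m f) = if d = Finsupp.single 0 (d 0)
      then PowerSeries.coeff (d 0) f else 0 := rfl

lemma substX0_zero : substX0 (𝒪 := 𝒪) m 0 = 0 := by
  ext d; rw [coeff_substX0]; simp

lemma substX0_add (f g : PowerSeries 𝒪) :
    substX0 m (f + g) = substX0 m f + substX0 m g := by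
  ext d
  rw [map_add, coeff_substX0, coeff_substX0, coeff_substX0, map_add]
  split_ifs <;> simp

lemma substX0_C (c : 𝒪) :
    substX0 m (PowerSeries.C c) = C c := by
  ext d
  rw [coeff_substX0, coeff_C, PowerSeries.coeff_C]
  by_cases hd : d = 0
  · subst hd; simp
  · rw [if_neg hd]
    split_ifs with h1 h2
    · exact absurd (by rw [h1, h2, Finsupp.single_zero]) hd
    · rfl
    · rfl

lemma substX0_X_mul (f : PowerSeries 𝒪) :
    substX0 m (PowerSeries.X * f) = X 0 * substX0 m f := by
  ext d
  rw [coeff_substX0, X_def, coeff_monomial_mul]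
  by_cases h1 : Finsupp.single (0 : Fin (m + 1)) 1 ≤ d
  · rw [if_pos h1, one_mul, coeff_substX0]
    have hd0 : 1 ≤ d 0 := Finsupp.single_le_iff.mp h1
    have hsub0 : ((d - Finsupp.single (0 : Fin (m + 1)) 1 : Fin (m + 1) →₀ ℕ)) 0 = d 0 - 1 :=
      by rw [Finsupp.tsub_apply, Finsupp.single_eq_same]
    have hiff : d = Finsupp.single 0 (d 0) ↔
        d - Finsupp.single (0 : Fin (m + 1)) 1
          = Finsupp.single 0 (((d - Finsupp.single (0 : Fin (m + 1)) 1 : Fin (m + 1) →₀ ℕ)) 0) := by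
      rw [hsub0]
      constructor
      · intro h
        conv_lhs => rw [h]
        rw [← Finsupp.single_tsub]
      · intro h
        have h4 := tsub_add_cancel_of_le h1
        rw [h] at h4
        conv_lhs => rw [← h4]
        rw [← Finsupp.single_add, Nat.sub_add_cancel hd0]
    by_cases h2 : d = Finsupp.single 0 (d 0)
    · rw [if_pos h2, if_pos (hiff.mp h2), hsub0]
      obtain ⟨k, hk⟩ : ∃ k, d 0 = k + 1 := ⟨d 0 - 1, (Nat.sub_add_cancel hd0).symm⟩
      rw [hk, PowerSeries.coeff_succ_X_mul, Nat.add_sub_cancel]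
    · rw [if_neg h2, if_neg (fun h => h2 (hiff.mpr h))]
  · rw [if_neg h1]
    split_ifs with h2
    · have : d 0 = 0 := by
        by_contra h
        exact h1 (Finsupp.single_le_iff.mpr (Nat.one_le_iff_ne_zero.mpr h))
      rw [this, PowerSeries.coeff_zero_X_mul]
    · rfl

lemma coeff_X0_pow_mul (k : ℕ) (t : MvPowerSeries (Fin (m + 1)) 𝒪)
    (d : Fin (m + 1) →₀ ℕ) (h : d 0 < k) : coeff d (X 0 ^ k * t) = 0 := by
  rw [X_pow_eq, coeff_monomial_mul, if_neg]
  intro hle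
  exact absurd (Finsupp.single_le_iff.mp hle) (not_le.mpr h)

noncomputable def sstep (ui : Fin (m + 1) → MvPowerSeries (Fin (m + 1)) 𝒪)
    (r : MvPowerSeries (Fin (m + 1)) 𝒪) : MvPowerSeries (Fin (m + 1)) 𝒪 :=
  comp 0 r + ∑ j ∈ Finset.univ.erase 0, (comp j r - ui j * (X j * comp j r))

lemma key_step (ui : Fin (m + 1) → MvPowerSeries (Fin (m + 1)) 𝒪)
    (r : MvPowerSeries (Fin (m + 1)) 𝒪) :
    r - (C (constantCoeff r) + X 0 * sstep ui r)
      = ∑ j ∈ Finset.univ.erase 0,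
        (X j - X 0 + ui j * (X 0 * X j)) * comp j r := by
  rw [sub_eq_iff_eq_add]
  conv_lhs => rw [decomp r]
  rw [← Finset.add_sum_erase _ _ (Finset.mem_univ (0 : Fin (m + 1))), sstep, mul_add,
    Finset.mul_sum]
  have hre : ∀ S2 S3 cc x0c0 : MvPowerSeries (Fin (m + 1)) 𝒪,
      S2 + (cc + (x0c0 + S3)) = cc + (x0c0 + (S2 + S3)) := by intros; ring
  rw [hre, ← Finset.sum_add_distrib]
  have hsum : ∀ j ∈ Finset.univ.erase (0 : Fin (m + 1)),
      (X j - X 0 + ui j * (X 0 * X j)) * comp j r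
        + X 0 * (comp j r - ui j * (X j * comp j r)) = X j * comp j r := by
    intro j _; ring
  rw [Finset.sum_congr rfl hsum]

noncomputable def A (ui : Fin (m + 1) → MvPowerSeries (Fin (m + 1)) 𝒪) :
    ℕ → MvPowerSeries (Fin (m + 1)) 𝒪 → PowerSeries 𝒪
  | 0, _ => 0
  | n + 1, r => PowerSeries.C (constantCoeff r)
      + PowerSeries.X * A ui n (sstep ui r)

lemma unroll (ui : Fin (m + 1) → MvPowerSeries (Fin (m + 1)) 𝒪) (n : ℕ)
    (r : MvPowerSeries (Fin (m + 1)) 𝒪) :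
    r - substX0 m (A ui n r)
      = (∑ j ∈ Finset.univ.erase 0, (X j - X 0 + ui j * (X 0 * X j)) *
          (∑ k ∈ Finset.range n, X 0 ^ k * comp j ((sstep ui)^[k] r)))
        + X 0 ^ n * (sstep ui)^[n] r := by
  induction n generalizing r with
  | zero => simp [A, substX0_zero]
  | succ n ih =>
    have e1 : r - substX0 m (A ui (n + 1) r)
        = (r - (C (constantCoeff r) + X 0 * sstep ui r))
          + X 0 * (sstep ui r - substX0 m (A ui n (sstep ui r))) := by
      rw [A, substX0_add, substX0_C, substX0_X_mul]; ring
    rw [e1, key_step, ih (sstep ui r), mul_add, Finset.mul_sum]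
    have e2 : ∀ S1 S2 T : MvPowerSeries (Fin (m + 1)) 𝒪,
        S1 + (S2 + T) = (S1 + S2) + T := by intros; ring
    rw [e2, ← Finset.sum_add_distrib]
    have e3 : ∀ j ∈ Finset.univ.erase (0 : Fin (m + 1)),
        (X j - X 0 + ui j * (X 0 * X j)) * comp j r
          + X 0 * ((X j - X 0 + ui j * (X 0 * X j)) *
              (∑ k ∈ Finset.range n, X 0 ^ k * comp j ((sstep ui)^[k] (sstep ui r))))
        = (X j - X 0 + ui j * (X 0 * X j)) *
            (∑ k ∈ Finset.range (n + 1), X 0 ^ k * comp j ((sstep ui)^[k] r)) := by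
      intro j _
      have hS : (∑ k ∈ Finset.range (n + 1), X 0 ^ k * comp j ((sstep ui)^[k] r))
          = X 0 * (∑ k ∈ Finset.range n, X 0 ^ k * comp j ((sstep ui)^[k] (sstep ui r)))
            + comp j r := by
        rw [Finset.sum_range_succ', Finset.mul_sum]
        simp only [Function.iterate_succ_apply, pow_succ', pow_zero, one_mul,
          Function.iterate_zero_apply, mul_assoc]
      rw [hS]; ring
    rw [Finset.sum_congr rfl e3]
    have e4 : X 0 * (X 0 ^ n * (sstep ui)^[n] (sstep ui r))
        = X 0 ^ (n + 1) * (sstep ui)^[n + 1] r := by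
      rw [Function.iterate_succ_apply, pow_succ', mul_assoc]
    rw [e4]

lemma A_stable (ui : Fin (m + 1) → MvPowerSeries (Fin (m + 1)) 𝒪) :
    ∀ (n : ℕ) (r : MvPowerSeries (Fin (m + 1)) 𝒪) (k : ℕ), k < n →
      PowerSeries.coeff k (A ui (n + 1) r) = PowerSeries.coeff k (A ui n r) := by
  intro n
  induction n with
  | zero => intro r k hk; omega
  | succ n ih =>
    intro r k hk
    match k with
    | 0 => simp [A]
    | k + 1 =>
      conv_lhs => rw [A]
      conv_rhs => rw [A]
      rw [map_add, map_add, PowerSeries.coeff_C, if_neg (Nat.succ_ne_zero k),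
        PowerSeries.coeff_succ_X_mul, PowerSeries.coeff_succ_X_mul,
        ih (sstep ui r) k (by omega)]

lemma coeff_A_ge (ui : Fin (m + 1) → MvPowerSeries (Fin (m + 1)) 𝒪)
    (r : MvPowerSeries (Fin (m + 1)) 𝒪) (k : ℕ) :
    ∀ n, k + 1 ≤ n → PowerSeries.coeff k (A ui n r) = PowerSeries.coeff k (A ui (k + 1) r) := by
  refine Nat.le_induction rfl ?_
  intro n hn ih
  rw [A_stable ui n r k (by omega), ih]

/-- partial sums of the coefficient series -/
noncomputable def cpart (ui : Fin (m + 1) → MvPowerSeries (Fin (m + 1)) 𝒪)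
    (i j : Fin (m + 1)) (n : ℕ) : MvPowerSeries (Fin (m + 1)) 𝒪 :=
  ∑ k ∈ Finset.range n, X 0 ^ k * comp j ((sstep ui)^[k] (X i))

/-- the limit of the partial sums `cpart` -/
noncomputable def climit (ui : Fin (m + 1) → MvPowerSeries (Fin (m + 1)) 𝒪)
    (i j : Fin (m + 1)) : MvPowerSeries (Fin (m + 1)) 𝒪 :=
  fun d => coeff d (cpart ui i j (d 0 + 1))

lemma coeff_cpart_stable (ui : Fin (m + 1) → MvPowerSeries (Fin (m + 1)) 𝒪)
    (i j : Fin (m + 1)) (d : Fin (m + 1) →₀ ℕ) :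
    ∀ n, d 0 + 1 ≤ n → coeff d (cpart ui i j n) = coeff d (climit ui i j) := by
  refine Nat.le_induction rfl ?_
  intro n hn ih
  rw [cpart, Finset.sum_range_succ, map_add, ← cpart,
    coeff_X0_pow_mul n _ d (by omega), add_zero, ih]

lemma limit_eq (ui : Fin (m + 1) → MvPowerSeries (Fin (m + 1)) 𝒪) (i : Fin (m + 1)) :
    X i - substX0 m (PowerSeries.mk fun k => PowerSeries.coeff k (A ui (k + 1) (X i)))
      = ∑ j ∈ Finset.univ.erase 0, (X j - X 0 + ui j * (X 0 * X j)) * climit ui i j := by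
  ext d
  have h1 : coeff d (substX0 m (PowerSeries.mk fun k =>
        PowerSeries.coeff k (A ui (k + 1) (X i))))
      = coeff d (substX0 m (A ui (d 0 + 1) (X i))) := by
    rw [coeff_substX0, coeff_substX0]
    split_ifs with h
    · rw [PowerSeries.coeff_mk]
    · rfl
  have h2 : X i - substX0 m (A ui (d 0 + 1) (X i))
      = (∑ j ∈ Finset.univ.erase 0, (X j - X 0 + ui j * (X 0 * X j)) *
          (cpart ui i j (d 0 + 1))) + X 0 ^ (d 0 + 1) * (sstep ui)^[d 0 + 1] (X i) :=
    unroll ui (d 0 + 1) (X i)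
  have h3 : coeff d (X i - substX0 m (PowerSeries.mk fun k =>
        PowerSeries.coeff k (A ui (k + 1) (X i))))
      = coeff d (X i - substX0 m (A ui (d 0 + 1) (X i))) := by
    rw [map_sub, map_sub, h1]
  rw [h3, h2, map_add, coeff_X0_pow_mul _ _ _ (by omega), add_zero, map_sum, map_sum]
  refine Finset.sum_congr rfl ?_
  intro j _
  rw [coeff_mul, coeff_mul]
  refine Finset.sum_congr rfl ?_
  intro p hp
  have hpd : p.1 + p.2 = d := Finset.HasAntidiagonal.mem_antidiagonal.mp hp
  have hp2 : p.2 0 ≤ d 0 := by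
    have : p.1 0 + p.2 0 = d 0 := by rw [← Finsupp.add_apply, hpd]
    omega
  rw [coeff_cpart_stable ui i j p.2 (d 0 + 1) (by omega)]

lemma constantCoeff_comp (i j : Fin (m + 1)) :
    constantCoeff (comp j (X i : MvPowerSeries (Fin (m + 1)) 𝒪)) = if j = i then 1 else 0 := by
  rw [← coeff_zero_eq_constantCoeff_apply, coeff_comp, zero_add]
  have hnu : nu (Finsupp.single j 1) = (j : WithBot (Fin (m + 1))) := by
    unfold nu
    rw [Finsupp.support_single_ne_zero _ one_ne_zero]
    exact Finset.min_singleton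
  rw [if_pos hnu, coeff_X]
  by_cases h : j = i
  · subst h; simp
  · rw [if_neg (fun hh => h ((Finsupp.single_left_inj one_ne_zero).mp hh)), if_neg h]

lemma constantCoeff_sstep (ui : Fin (m + 1) → MvPowerSeries (Fin (m + 1)) 𝒪)
    (i : Fin (m + 1)) (hi : i ≠ 0) :
    constantCoeff (sstep ui (X i)) = 1 := by
  rw [sstep, map_add, map_sum]
  have h0 : constantCoeff (comp 0 (X i : MvPowerSeries (Fin (m + 1)) 𝒪)) = 0 := by
    rw [constantCoeff_comp, if_neg (fun h => hi h.symm)]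
  have hterm : ∀ j ∈ Finset.univ.erase (0 : Fin (m + 1)),
      constantCoeff (comp j (X i) - ui j * (X j * comp j (X i)))
        = if j = i then 1 else 0 := by
    intro j _
    rw [map_sub, map_mul, map_mul, constantCoeff_X, zero_mul, mul_zero, sub_zero,
      constantCoeff_comp]
  rw [h0, zero_add, Finset.sum_congr rfl hterm, Finset.sum_ite_eq' _ i,
    if_pos (Finset.mem_erase.mpr ⟨hi, Finset.mem_univ i⟩)]

end PencilAux

/-- For every `i` with `1 ≤ i ≤ m` there is a one-variable power series
`f_i ∈ X + X²·𝒪⟦X⟧` such that `X_i − f_i(X_0) ∈ I'`. -/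
theorem statement2 {𝒪 : Type*} [CommRing 𝒪] [IsDomain 𝒪] [IsDiscreteValuationRing 𝒪]
    [IsAdicComplete (IsLocalRing.maximalIdeal 𝒪) 𝒪]
    (π : 𝒪) (hπ : Ideal.span {π} = IsLocalRing.maximalIdeal 𝒪)
    (m : ℕ) (hm : 1 ≤ m)
    (ui : Fin (m + 1) → MvPowerSeries (Fin (m + 1)) 𝒪)
    (u : (MvPowerSeries (Fin (m + 1)) 𝒪)ˣ) :
    ∀ i : Fin (m + 1), i ≠ 0 →
      ∃ f : PowerSeries 𝒪,
        PowerSeries.coeff 0 f = 0 ∧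
        PowerSeries.coeff 1 f = 1 ∧
        X i - substX0 m f ∈ pencilIdeal π m ui u := by
  intro i hi
  refine ⟨PowerSeries.mk fun k => PowerSeries.coeff k (PencilAux.A ui (k + 1) (X i)), ?_, ?_, ?_⟩
  · rw [PowerSeries.coeff_mk]
    simp [PencilAux.A]
  · rw [PowerSeries.coeff_mk]
    conv_lhs => rw [PencilAux.A]
    rw [map_add, PowerSeries.coeff_C, if_neg one_ne_zero]
    have h01 : (PowerSeries.coeff 1) (PowerSeries.X * PencilAux.A ui 1 (PencilAux.sstep ui (X i)))
        = (PowerSeries.coeff 0) (PencilAux.A ui 1 (PencilAux.sstep ui (X i))) :=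
      PowerSeries.coeff_succ_X_mul 0 _
    rw [h01]
    conv_lhs => rw [PencilAux.A]
    rw [map_add, PowerSeries.coeff_zero_C, PowerSeries.coeff_zero_X_mul, add_zero, zero_add,
      PencilAux.constantCoeff_sstep ui i hi]
  · rw [PencilAux.limit_eq ui i]
    refine Ideal.sum_mem _ ?_
    intro j hj
    have hj0 : j ≠ 0 := Finset.ne_of_mem_erase hj
    have hgen : (X 0 - X j - ui j * (X 0 * X j)) ∈ pencilIdeal π m ui u :=
      Ideal.subset_span (Set.mem_union_left _ ⟨j, hj0, rfl⟩)
    have heq : (X j - X 0 + ui j * (X 0 * X j)) * PencilAux.climit ui i j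
        = (-(PencilAux.climit ui i j)) * (X 0 - X j - ui j * (X 0 * X j)) := by ring
    rw [heq]
    exact Ideal.mul_mem_left _ _ hgen
end

section
/- Let h ∈ 𝒪⟦X⟧ be a one-variable formal power series such that h − X^{m+1} ∈ π·𝒪⟦X⟧ + X^{m+2}·𝒪⟦X⟧ and such that the constant coefficient of h is not divisible by π². Then there exist a unit v of 𝒪⟦X⟧ and a monic polynomial h̃ ∈ 𝒪[X] of degree m+1 which is Eisenstein with respect to the maximal ideal of 𝒪 (i.e. every coefficient of h̃ of degree < m+1 lies in (π) and the constant coefficient of h̃ does not lie in (π²)) such that h = v·h̃ in 𝒪⟦X⟧. -/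
open PowerSeries

private lemma aux_dvd_coeff_mul {R : Type*} [CommRing R] (d : R) (f g : PowerSeries R)
    (hf : ∀ j, d ∣ PowerSeries.coeff j f) (j : ℕ) :
    d ∣ PowerSeries.coeff j (f * g) := by
  rw [PowerSeries.coeff_mul]
  exact Finset.dvd_sum fun p _ => (hf p.1).mul_right _

/-- Weierstrass preparation for `h ∈ 𝒪⟦X⟧` with `h − X^{m+1} ∈ π·𝒪⟦X⟧ + X^{m+2}·𝒪⟦X⟧` and
constant coefficient not divisible by `π²`: there is a unit `v` of `𝒪⟦X⟧` and a monic
Eisenstein polynomial `h̃ ∈ 𝒪[X]` of degree `m+1` with `h = v·h̃`. -/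
theorem statement4 {𝒪 : Type*} [CommRing 𝒪] [IsDomain 𝒪] [IsDiscreteValuationRing 𝒪]
    [IsAdicComplete (IsLocalRing.maximalIdeal 𝒪) 𝒪]
    (π : 𝒪) (hπ : Ideal.span {π} = IsLocalRing.maximalIdeal 𝒪)
    (m : ℕ) (hm : 1 ≤ m)
    (h : PowerSeries 𝒪)
    (hshape : ∃ a b : PowerSeries 𝒪,
      h - PowerSeries.X ^ (m + 1) = PowerSeries.C π * a + PowerSeries.X ^ (m + 2) * b)
    (hconst : ¬ π ^ 2 ∣ PowerSeries.constantCoeff h) :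
    ∃ (v : (PowerSeries 𝒪)ˣ) (ht : Polynomial 𝒪),
      ht.Monic ∧
      ht.natDegree = m + 1 ∧
      (∀ i < m + 1, ht.coeff i ∈ Ideal.span {π}) ∧
      ht.coeff 0 ∉ Ideal.span {π ^ 2} ∧
      h = (v : PowerSeries 𝒪) * (ht : PowerSeries 𝒪) := by
  classical
  obtain ⟨a, b, hab⟩ := hshape
  set n := m + 1 with hn
  have hflip : ∀ d x y : 𝒪, d ∣ x - y → d ∣ y - x := fun d x y hd => by
    simpa [neg_sub] using dvd_neg.mpr hd
  have hh : h = X ^ n + C π * a + X ^ (m + 2) * b := by linear_combination hab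
  -- the shift operator
  set T : PowerSeries 𝒪 → PowerSeries 𝒪 :=
    fun f => PowerSeries.mk fun j => PowerSeries.coeff (j + n) f with hT
  have hTcoeff : ∀ f j, PowerSeries.coeff j (T f) = PowerSeries.coeff (j + n) f := by
    intro f j; simp [hT]
  have hTsub : ∀ f g, T (f - g) = T f - T g := by
    intro f g; ext j; simp [hTcoeff]
  -- the low part of `a`
  set A : PowerSeries 𝒪 :=
    PowerSeries.mk fun j => if j < n then PowerSeries.coeff j a else 0 with hA
  set E : PowerSeries 𝒪 := T h with hE
  -- key decomposition of h
  have hdec : h = C π * A + X ^ n * E := by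
    ext j
    rcases lt_or_ge j n with hj | hj
    · have h1 : PowerSeries.coeff j (X ^ n : PowerSeries 𝒪) = 0 := by
        rw [PowerSeries.coeff_X_pow, if_neg hj.ne]
      have h2 : PowerSeries.coeff j ((X : PowerSeries 𝒪) ^ (m + 2) * b) = 0 := by
        rw [PowerSeries.coeff_X_pow_mul', if_neg (by omega)]
      have h3 : PowerSeries.coeff j ((X : PowerSeries 𝒪) ^ n * E) = 0 := by
        rw [PowerSeries.coeff_X_pow_mul', if_neg (by omega)]
      rw [hh]
      simp [h1, h2, h3, hA, PowerSeries.coeff_C_mul, if_pos hj]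
    · have h3 : PowerSeries.coeff j ((X : PowerSeries 𝒪) ^ n * E) =
          PowerSeries.coeff j h := by
        rw [PowerSeries.coeff_X_pow_mul', if_pos hj, hE, hTcoeff, Nat.sub_add_cancel hj]
      simp [h3, hA, PowerSeries.coeff_C_mul, if_neg (not_lt.mpr hj)]
  -- constant coefficient of E is a unit
  have hEconst : PowerSeries.constantCoeff E = 1 + π * PowerSeries.coeff n a := by
    rw [← PowerSeries.coeff_zero_eq_constantCoeff, hE, hTcoeff, zero_add, hh]
    have h1 : PowerSeries.coeff n (X ^ n : PowerSeries 𝒪) = 1 := by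
      rw [PowerSeries.coeff_X_pow, if_pos rfl]
    have h2 : PowerSeries.coeff n ((X : PowerSeries 𝒪) ^ (m + 2) * b) = 0 := by
      rw [PowerSeries.coeff_X_pow_mul', if_neg (by omega)]
    simp [h1, h2, PowerSeries.coeff_C_mul]
  have hπmem : π ∈ IsLocalRing.maximalIdeal 𝒪 := by
    rw [← hπ]; exact Ideal.mem_span_singleton_self π
  have hunit_one_sub : ∀ t : 𝒪, IsUnit (1 - π * t) := by
    intro t
    apply IsLocalRing.isUnit_of_mem_nonunits_one_sub_self
    have h1 : (1 : 𝒪) - (1 - π * t) = π * t := by ring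
    rw [h1]
    exact (IsLocalRing.mem_maximalIdeal _).mp (Ideal.mul_mem_right t _ hπmem)
  have hEunit : IsUnit E := by
    rw [PowerSeries.isUnit_iff_constantCoeff, hEconst]
    have := hunit_one_sub (-(PowerSeries.coeff n a))
    simpa using this
  obtain ⟨uE, huE⟩ := hEunit
  set Einv : PowerSeries 𝒪 := (↑uE⁻¹ : PowerSeries 𝒪) with hEinv
  have hEinvE : Einv * E = 1 := by
    rw [hEinv, ← huE]; exact_mod_cast uE.inv_mul
  -- the approximating sequence
  set q : ℕ → PowerSeries 𝒪 :=
    fun k => Nat.rec Einv (fun _ p => Einv * (1 - C π * T (p * A))) k with hq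
  have hqs : ∀ k, q (k + 1) = Einv * (1 - C π * T (q k * A)) := fun k => by rw [hq]
  have hqE : ∀ k, q (k + 1) * E = 1 - C π * T (q k * A) := by
    intro k
    rw [hqs k, mul_comm Einv _, mul_assoc, hEinvE, mul_one]
  -- coefficientwise divisibility of successive differences
  have hdiff : ∀ k j, π ^ k ∣ PowerSeries.coeff j (q (k + 1) - q k) := by
    intro k
    induction k with
    | zero => intro j; simp
    | succ k ih =>
      have hid : q (k + 2) - q (k + 1) = (C π * T ((q k - q (k + 1)) * A)) * Einv := by
        rw [hqs (k + 1), hqs k, sub_mul, hTsub]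
        ring
      intro j
      rw [hid]
      apply aux_dvd_coeff_mul
      intro i
      rw [PowerSeries.coeff_C_mul, pow_succ']
      apply mul_dvd_mul_left
      rw [hTcoeff]
      apply aux_dvd_coeff_mul
      intro l
      have h1 := ih l
      rw [map_sub] at h1 ⊢
      exact hflip _ _ _ h1
  have hdiff2 : ∀ k l, k ≤ l → ∀ j, π ^ k ∣ PowerSeries.coeff j (q l - q k) := by
    intro k l hkl
    induction l, hkl using Nat.le_induction with
    | base => intro j; simp
    | succ l hkl ih =>
      intro j
      have h1 : q (l + 1) - q k = (q (l + 1) - q l) + (q l - q k) := by ring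
      rw [h1, map_add]
      exact dvd_add ((pow_dvd_pow π hkl).trans (hdiff l j)) (ih j)
  -- the limit Q
  have hsmul : ∀ k : ℕ, ((IsLocalRing.maximalIdeal 𝒪) ^ k • ⊤ : Submodule 𝒪 𝒪) =
      Ideal.span {π ^ k} := by
    intro k
    rw [smul_eq_mul, Ideal.mul_top, ← hπ, Ideal.span_singleton_pow]
  have hmem : ∀ (k : ℕ) (x : 𝒪), π ^ k ∣ x →
      x ∈ ((IsLocalRing.maximalIdeal 𝒪) ^ k • ⊤ : Submodule 𝒪 𝒪) := by
    intro k x hx; rw [hsmul k]; exact Ideal.mem_span_singleton.mpr hx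
  have hex : ∀ j : ℕ, ∃ Lj : 𝒪, ∀ k, (PowerSeries.coeff j (q k)) ≡ Lj
      [SMOD ((IsLocalRing.maximalIdeal 𝒪) ^ k • ⊤ : Submodule 𝒪 𝒪)] := by
    intro j
    apply IsPrecomplete.prec
        (inferInstance : IsPrecomplete (IsLocalRing.maximalIdeal 𝒪) 𝒪)
    intro k l hkl
    rw [SModEq.sub_mem]
    apply hmem
    have h1 := hdiff2 k l hkl j
    rw [map_sub] at h1
    exact hflip _ _ _ h1
  choose L hL using hex
  set Q : PowerSeries 𝒪 := PowerSeries.mk L with hQ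
  have hQapprox : ∀ k j, π ^ k ∣ PowerSeries.coeff j (Q - q k) := by
    intro k j
    have h1 := hL j k
    rw [SModEq.sub_mem, hsmul k, Ideal.mem_span_singleton] at h1
    rw [map_sub]
    have hQj : PowerSeries.coeff j Q = L j := by simp [hQ]
    rw [hQj]
    exact hflip _ _ _ h1
  -- the fixed point identity
  have key : Q * E + C π * T (Q * A) = 1 := by
    rw [← sub_eq_zero]
    ext j
    rw [map_zero]
    apply IsHausdorff.haus
      (inferInstance : IsHausdorff (IsLocalRing.maximalIdeal 𝒪) 𝒪)
    intro k
    rw [SModEq.sub_mem, sub_zero]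
    apply hmem
    have hΔk : ∀ i, π ^ k ∣
        PowerSeries.coeff i (q k * E + C π * T (q k * A) - 1) := by
      have hid : q k * E + C π * T (q k * A) - 1 = (q k - q (k + 1)) * E := by
        rw [sub_mul]
        linear_combination hqE k
      intro i
      rw [hid]
      apply aux_dvd_coeff_mul
      intro l
      have h1 := hdiff k l
      rw [map_sub] at h1 ⊢
      exact hflip _ _ _ h1
    have hrest : ∀ i, π ^ k ∣ PowerSeries.coeff i
        ((Q * E + C π * T (Q * A) - 1) - (q k * E + C π * T (q k * A) - 1)) := by
      have hid : (Q * E + C π * T (Q * A) - 1) - (q k * E + C π * T (q k * A) - 1)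
          = (Q - q k) * E + C π * T ((Q - q k) * A) := by
        have e1 : (Q - q k) * A = Q * A - q k * A := sub_mul _ _ _
        rw [e1, hTsub]
        ring
      intro i
      rw [hid, map_add]
      refine dvd_add (aux_dvd_coeff_mul _ _ _ (hQapprox k) i) ?_
      rw [PowerSeries.coeff_C_mul, hTcoeff]
      exact (aux_dvd_coeff_mul _ _ _ (hQapprox k) _).mul_left π
    have hsplit : (Q * E + C π * T (Q * A) - 1) =
        (q k * E + C π * T (q k * A) - 1) +
        ((Q * E + C π * T (Q * A) - 1) - (q k * E + C π * T (q k * A) - 1)) := by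
      ring
    rw [hsplit, map_add]
    exact dvd_add (hΔk j) (hrest j)
  -- consequences
  set g : PowerSeries 𝒪 := Q * h with hg
  have hgdec : g = C π * (Q * A) + X ^ n * (Q * E) := by rw [hg, hdec]; ring
  have hQE : Q * E = 1 - C π * T (Q * A) := by linear_combination key
  have hg_low : ∀ j, j < n → PowerSeries.coeff j g = π * PowerSeries.coeff j (Q * A) := by
    intro j hj
    rw [hgdec, map_add, PowerSeries.coeff_C_mul, PowerSeries.coeff_X_pow_mul',
      if_neg (by omega), add_zero]
  have hg_high : ∀ j, PowerSeries.coeff (j + n) g = if j = 0 then 1 else 0 := by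
    intro j
    rw [hgdec, map_add, PowerSeries.coeff_C_mul, PowerSeries.coeff_X_pow_mul, hQE, map_sub,
      PowerSeries.coeff_C_mul, hTcoeff, PowerSeries.coeff_one]
    ring
  have hg_n : PowerSeries.coeff n g = 1 := by simpa using hg_high 0
  have hg_gt : ∀ j, n < j → PowerSeries.coeff j g = 0 := by
    intro j hj
    have h1 := hg_high (j - n)
    rw [if_neg (by omega)] at h1
    rwa [Nat.sub_add_cancel (by omega)] at h1
  set ht : Polynomial 𝒪 := PowerSeries.trunc (n + 1) g with hht
  have htc : ∀ i, ht.coeff i = if i < n + 1 then PowerSeries.coeff i g else 0 := by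
    intro i; rw [hht, PowerSeries.coeff_trunc]
  have hcoe : (ht : PowerSeries 𝒪) = g := by
    ext j
    rw [Polynomial.coeff_coe, htc]
    split_ifs with hj
    · rfl
    · exact (hg_gt j (by omega)).symm
  have hdeg : ht.natDegree = n := by
    apply le_antisymm
    · rw [Polynomial.natDegree_le_iff_coeff_eq_zero]
      intro N hN
      rcases lt_or_ge N (n + 1) with hN' | hN'
      · rw [htc, if_pos hN', hg_gt N hN]
      · rw [htc, if_neg (by omega)]
    · apply Polynomial.le_natDegree_of_ne_zero
      rw [htc, if_pos (by omega), hg_n]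
      exact one_ne_zero
  have hmonic : ht.Monic := by
    rw [Polynomial.Monic, Polynomial.leadingCoeff, hdeg, htc, if_pos (by omega), hg_n]
  -- Q is a unit
  have hQconst : IsUnit (PowerSeries.constantCoeff Q) := by
    have h1 := congrArg (PowerSeries.constantCoeff) key
    rw [map_add, map_mul, map_mul, PowerSeries.constantCoeff_C, map_one] at h1
    have h2 : PowerSeries.constantCoeff Q * PowerSeries.constantCoeff E
        = 1 - π * PowerSeries.constantCoeff (T (Q * A)) := by linear_combination h1
    exact isUnit_of_mul_isUnit_left (h2 ▸ hunit_one_sub _)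
  have hQunit : IsUnit Q := PowerSeries.isUnit_iff_constantCoeff.mpr hQconst
  obtain ⟨u, hu⟩ := hQunit
  have hinvu : ((↑u⁻¹ : PowerSeries 𝒪) * ↑u) = 1 := by exact_mod_cast u.inv_mul
  have hhu : h = (↑u⁻¹ : PowerSeries 𝒪) * g := by
    rw [hg, ← hu, ← mul_assoc, hinvu, one_mul]
  refine ⟨u⁻¹, ht, hmonic, hdeg, ?_, ?_, ?_⟩
  · intro i hi
    rw [Ideal.mem_span_singleton, htc, if_pos (by omega), hg_low i hi]
    exact dvd_mul_right π _
  · rw [Ideal.mem_span_singleton, htc, if_pos (by omega)]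
    intro hdvd
    apply hconst
    rw [PowerSeries.coeff_zero_eq_constantCoeff] at hdvd
    rw [hhu, map_mul]
    exact hdvd.mul_left _
  · rw [hcoe]
    exact hhu
end

section
/- For every integer a, the inclusions fil_b M ∩ fil^c M ⊆ fil^M_a M, over all pairs of integers (b,c) with b − c = a, induce a well-defined isomorphism of R-modules ⊕_{b−c=a} gr^c_b M ≅ gr^M_a M (the direct sum has only finitely many nonzero summands since N is nilpotent). -/
open DirectSum

/-- `fil_a M = ker(N^{a+1})` for `a ≥ −1`, and `fil_a M = 0` for `a < −1`. -/
noncomputable def filKer {R M : Type*} [CommRing R] [AddCommGroup M] [Module R M]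
    (N : M →ₗ[R] M) (a : ℤ) : Submodule R M :=
  LinearMap.ker (N ^ (a + 1).toNat)

/-- `fil^a M = range(N^a)` for `a ≥ 0`, and `fil^a M = M` for `a < 0`. -/
noncomputable def filRange {R M : Type*} [CommRing R] [AddCommGroup M] [Module R M]
    (N : M →ₗ[R] M) (a : ℤ) : Submodule R M :=
  LinearMap.range (N ^ a.toNat)

/-- The monodromy filtration `fil^M_a M = Σ_{b−c=a} (fil_b M ∩ fil^c M)`. -/
noncomputable def filMonodromy {R M : Type*} [CommRing R] [AddCommGroup M] [Module R M]
    (N : M →ₗ[R] M) (a : ℤ) : Submodule R M :=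
  ⨆ (b : ℤ) (c : ℤ) (_ : b - c = a), filKer N b ⊓ filRange N c

/-- The graded piece `gr^M_a M = fil^M_a M / fil^M_{a−1} M`. -/
noncomputable abbrev grM {R M : Type*} [CommRing R] [AddCommGroup M] [Module R M]
    (N : M →ₗ[R] M) (a : ℤ) :=
  (filMonodromy N a) ⧸ (filMonodromy N (a - 1)).comap (filMonodromy N a).subtype

/-- The graded piece
`gr^c_b M = (fil_b M ∩ fil^c M) / ((fil_{b−1} M + fil^{c+1} M) ∩ fil_b M ∩ fil^c M)`. -/
noncomputable abbrev grBC {R M : Type*} [CommRing R] [AddCommGroup M] [Module R M]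
    (N : M →ₗ[R] M) (c b : ℤ) :=
  ↥(filKer N b ⊓ filRange N c) ⧸
    (filKer N (b - 1) ⊔ filRange N (c + 1)).comap (filKer N b ⊓ filRange N c).subtype

/-!
The argument works for any increasing filtration `F` and decreasing filtration `G` of a
module, with `W a = filConv F G a = ⨆ b, F b ⊓ G (b - a)`; for the monodromy filtration
`F b = ker N^{b+1}` and `G c = im N^c`. Since `F (b - 1) ≤ F b` and `G (c + 1) ≤ G c`, the modular law gives
`(F (b - 1) ⊔ G (c + 1)) ⊓ (F b ⊓ G c) = F (b - 1) ⊓ G c ⊔ F b ⊓ G (c + 1) ≤ W (b - c - 1)`,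
so each inclusion `F b ⊓ G (b - a) → W a` descends to the graded pieces. The induced map on the
direct sum is onto because `W a` is generated by the pieces, and injective because a finite sum of
elements `x b ∈ F b ⊓ G (b - a)` lies in `W (a - 1)` only if each `x b` does.
-/

theorem sup_inf_inf_eq_of_le {α : Type*} [Lattice α] [IsModularLattice α] {x x' y y' : α}
    (hx : x' ≤ x) (hy : y' ≤ y) : (x' ⊔ y') ⊓ (x ⊓ y) = x' ⊓ y ⊔ x ⊓ y' := by
  rw [← inf_assoc, sup_inf_assoc_of_le y' hx, sup_comm,
    sup_inf_assoc_of_le x' (inf_le_left.trans hy), sup_comm, inf_comm y']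

section Convolution

variable {R M : Type*} [Ring R] [AddCommGroup M] [Module R M] (F G : ℤ → Submodule R M)

def filConv (a : ℤ) : Submodule R M :=
  ⨆ (b : ℤ) (c : ℤ) (_ : b - c = a), F b ⊓ G c

abbrev grInf (c b : ℤ) :=
  ↥(F b ⊓ G c) ⧸ (F (b - 1) ⊔ G (c + 1)).comap (F b ⊓ G c).subtype

abbrev grConv (a : ℤ) :=
  ↥(filConv F G a) ⧸ (filConv F G (a - 1)).comap (filConv F G a).subtype

variable {F G}

theorem inf_le_filConv {a b c : ℤ} (h : b - c = a) : F b ⊓ G c ≤ filConv F G a :=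
  le_iSup_of_le b (le_iSup_of_le c (le_iSup_of_le h le_rfl))

theorem filConv_eq_iSup (a : ℤ) : filConv F G a = ⨆ b, F b ⊓ G (b - a) :=
  le_antisymm
    (iSup_le fun b => iSup_le fun c => iSup_le fun h => by
      obtain rfl : c = b - a := by omega
      exact le_iSup (fun b => F b ⊓ G (b - a)) b)
    (iSup_le fun b => inf_le_filConv (sub_sub_cancel b a))

theorem filConv_sub_one_le_sup (hF : Monotone F) (hG : Antitone G) (a b : ℤ) :
    filConv F G (a - 1) ≤ F (b - 1) ⊔ G (b - a + 1) := by
  refine iSup_le fun b' => iSup_le fun c => iSup_le fun h => ?_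
  rcases le_or_gt b' (b - 1) with hb | hb
  · exact le_sup_of_le_left (inf_le_left.trans (hF hb))
  · exact le_sup_of_le_right (inf_le_right.trans (hG (by omega)))

theorem sup_inf_inf_le_filConv_sub_one (hF : Monotone F) (hG : Antitone G) (a b : ℤ) :
    (F (b - 1) ⊔ G (b - a + 1)) ⊓ (F b ⊓ G (b - a)) ≤ filConv F G (a - 1) := by
  rw [sup_inf_inf_eq_of_le (hF (by omega)) (hG (by omega))]
  exact sup_le (inf_le_filConv (by omega)) (inf_le_filConv (by omega))

/-- Peel off the summand of largest index `K`: it is congruent modulo `F (K - 1)` to an element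
of `filConv F G (a - 1) ≤ F (K - 1) ⊔ G (K - a + 1)`, so the modular law puts it back into
`filConv F G (a - 1)`. -/
theorem mem_filConv_sub_one_of_sum_mem (hF : Monotone F) (hG : Antitone G) {a : ℤ}
    (x : ℤ → M) (hx : ∀ b, x b ∈ F b ⊓ G (b - a)) (s : Finset ℤ)
    (hs : ∑ b ∈ s, x b ∈ filConv F G (a - 1)) : ∀ b ∈ s, x b ∈ filConv F G (a - 1) := by
  classical
  induction s using Finset.induction_on_max with
  | empty => simp
  | insert K s hlt ih =>
    rw [Finset.sum_insert fun hK => (hlt K hK).false] at hs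
    have hrest : ∑ b ∈ s, x b ∈ F (K - 1) :=
      Submodule.sum_mem _ fun b hb => hF (Int.le_sub_one_of_lt (hlt b hb)) (hx b).1
    have hK : x K ∈ filConv F G (a - 1) := by
      refine sup_inf_inf_le_filConv_sub_one hF hG a K ⟨?_, hx K⟩
      rw [← add_sub_cancel_right (x K) (∑ b ∈ s, x b)]
      exact Submodule.sub_mem _ (filConv_sub_one_le_sup hF hG a K hs)
        (Submodule.mem_sup_left hrest)
    have hs' : ∑ b ∈ s, x b ∈ filConv F G (a - 1) := by
      rw [← add_sub_cancel_left (x K) (∑ b ∈ s, x b)]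
      exact Submodule.sub_mem _ hs hK
    simpa [hK] using ih hs'

variable (F G)

def grInfToGrConv (hF : Monotone F) (hG : Antitone G) (a b : ℤ) :
    grInf F G (b - a) b →ₗ[R] grConv F G a :=
  Submodule.liftQ _ (Submodule.mkQ _ ∘ₗ Submodule.inclusion (inf_le_filConv (sub_sub_cancel b a)))
    fun y hy => (Submodule.Quotient.mk_eq_zero _).2
      (sup_inf_inf_le_filConv_sub_one hF hG a b ⟨hy, y.2⟩)

def grSumToGrConv (hF : Monotone F) (hG : Antitone G) (a : ℤ) :
    (⨁ b, grInf F G (b - a) b) →ₗ[R] grConv F G a :=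
  toModule R ℤ _ (grInfToGrConv F G hF hG a)

def sumInfToFilConv (a : ℤ) : (⨁ b, ↥(F b ⊓ G (b - a))) →ₗ[R] filConv F G a :=
  toModule R ℤ _ fun b => Submodule.inclusion (inf_le_filConv (sub_sub_cancel b a))

variable {F G}

theorem grSumToGrConv_lof (hF : Monotone F) (hG : Antitone G) (a b : ℤ)
    (x : ↥(F b ⊓ G (b - a))) :
    grSumToGrConv F G hF hG a (lof R ℤ (fun b => grInf F G (b - a) b) b (Submodule.Quotient.mk x))
      = Submodule.Quotient.mk (Submodule.inclusion (inf_le_filConv (sub_sub_cancel b a)) x) := by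
  rw [grSumToGrConv, toModule_lof]
  rfl

theorem grSumToGrConv_comp_lmap_mkQ (hF : Monotone F) (hG : Antitone G) (a : ℤ) :
    grSumToGrConv F G hF hG a ∘ₗ lmap (fun _ => Submodule.mkQ _)
      = Submodule.mkQ _ ∘ₗ sumInfToFilConv F G a := by
  refine linearMap_ext R fun b => LinearMap.ext fun x => ?_
  simp only [LinearMap.comp_apply, lmap_lof, Submodule.mkQ_apply, grSumToGrConv_lof,
    sumInfToFilConv, toModule_lof]

theorem sumInfToFilConv_surjective (a : ℤ) : Function.Surjective (sumInfToFilConv F G a) := by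
  have hle : filConv F G a ≤
      (LinearMap.range (sumInfToFilConv F G a)).map (filConv F G a).subtype := by
    refine (filConv_eq_iSup a).le.trans (iSup_le fun b x hx =>
      Submodule.mem_map.2 ⟨_, ⟨lof R ℤ _ b ⟨x, hx⟩, rfl⟩, ?_⟩)
    simp [sumInfToFilConv, toModule_lof]
  rw [← LinearMap.range_eq_top, ← Submodule.comap_subtype_eq_top.2 hle,
    Submodule.comap_map_eq_of_injective (filConv F G a).injective_subtype]

theorem coe_sumInfToFilConv {a : ℤ} [∀ b (x : ↥(F b ⊓ G (b - a))), Decidable (x ≠ 0)]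
    (y : ⨁ b, ↥(F b ⊓ G (b - a))) :
    (sumInfToFilConv F G a y : M) = ∑ b ∈ y.support, (y b : M) := by
  conv_lhs => rw [← sum_support_of y]
  simp [sumInfToFilConv, ← lof_eq_of R, toModule_lof]

theorem grSumToGrConv_injective (hF : Monotone F) (hG : Antitone G) (a : ℤ) :
    Function.Injective (grSumToGrConv F G hF hG a) := by
  classical
  rw [injective_iff_map_eq_zero]
  intro ξ hξ
  obtain ⟨y, rfl⟩ := (lmap_surjective _).2 (fun b => Submodule.mkQ_surjective _) ξ
  have hy : (sumInfToFilConv F G a y : M) ∈ filConv F G (a - 1) := by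
    have hcomm := LinearMap.congr_fun (grSumToGrConv_comp_lmap_mkQ hF hG a) y
    rw [LinearMap.comp_apply, LinearMap.comp_apply, hξ] at hcomm
    rwa [eq_comm, Submodule.mkQ_apply, Submodule.Quotient.mk_eq_zero] at hcomm
  rw [coe_sumInfToFilConv] at hy
  have hmem := mem_filConv_sub_one_of_sum_mem hF hG (fun b => (y b : M)) (fun b => (y b).2) _ hy
  ext b
  rw [lmap_apply, DirectSum.zero_apply, Submodule.mkQ_apply, Submodule.Quotient.mk_eq_zero]
  by_cases hb : b ∈ y.support
  · exact filConv_sub_one_le_sup hF hG a b (hmem b hb)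
  · simp [DFinsupp.notMem_support_iff.1 hb]

theorem grSumToGrConv_surjective (hF : Monotone F) (hG : Antitone G) (a : ℤ) :
    Function.Surjective (grSumToGrConv F G hF hG a) := by
  refine Function.Surjective.of_comp (g := lmap fun _ => Submodule.mkQ _) ?_
  rw [← LinearMap.coe_comp, grSumToGrConv_comp_lmap_mkQ, LinearMap.coe_comp]
  exact (Submodule.mkQ_surjective _).comp (sumInfToFilConv_surjective a)

variable (F G)

noncomputable def grSumEquivGrConv (hF : Monotone F) (hG : Antitone G) (a : ℤ) :
    (⨁ b, grInf F G (b - a) b) ≃ₗ[R] grConv F G a :=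
  .ofBijective (grSumToGrConv F G hF hG a)
    ⟨grSumToGrConv_injective hF hG a, grSumToGrConv_surjective hF hG a⟩

end Convolution

section Monodromy

variable {R M : Type*} [CommRing R] [AddCommGroup M] [Module R M] (N : M →ₗ[R] M)

theorem monotone_filKer : Monotone (filKer N) := fun b b' h =>
  N.iterateKer.monotone (by omega : (b + 1).toNat ≤ (b' + 1).toNat)

theorem antitone_filRange : Antitone (filRange N) := fun c c' h =>
  N.iterateRange.monotone (by omega : c.toNat ≤ c'.toNat)

end Monodromy

theorem statement5_general {R M : Type*} [CommRing R] [AddCommGroup M] [Module R M]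
    (N : M →ₗ[R] M) (a : ℤ) :
    ∃ h : ∀ b : ℤ, filKer N b ⊓ filRange N (b - a) ≤ filMonodromy N a,
    ∃ e : (⨁ b : ℤ, grBC N (b - a) b) ≃ₗ[R] grM N a,
      ∀ (b : ℤ) (x : ↥(filKer N b ⊓ filRange N (b - a))),
        e (DirectSum.lof R ℤ (fun b => grBC N (b - a) b) b (Submodule.Quotient.mk x))
          = Submodule.Quotient.mk (Submodule.inclusion (h b) x) :=
  ⟨fun b => inf_le_filConv (sub_sub_cancel b a),
    grSumEquivGrConv _ _ (monotone_filKer N) (antitone_filRange N) a,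
    grSumToGrConv_lof (monotone_filKer N) (antitone_filRange N) a⟩

/-- For every integer `a`, the inclusions `fil_b M ∩ fil^c M ⊆ fil^M_a M` over pairs `(b,c)`
with `b − c = a` induce a well-defined isomorphism `⊕_{b−c=a} gr^c_b M ≅ gr^M_a M`. -/
theorem statement5 {R M : Type*} [CommRing R] [AddCommGroup M] [Module R M]
    (N : M →ₗ[R] M) (hN : IsNilpotent N) (a : ℤ) :
    ∃ h : ∀ b : ℤ, filKer N b ⊓ filRange N (b - a) ≤ filMonodromy N a,
    ∃ e : (⨁ b : ℤ, grBC N (b - a) b) ≃ₗ[R] grM N a,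
      ∀ (b : ℤ) (x : ↥(filKer N b ⊓ filRange N (b - a))),
        e (DirectSum.lof R ℤ (fun b => grBC N (b - a) b) b (Submodule.Quotient.mk x))
          = Submodule.Quotient.mk (Submodule.inclusion (h b) x) :=
  statement5_general N a
end

section
/- N maps fil^M_a M into fil^M_{a−2} M for every integer a. Consequently, for every integer a ≥ 0 the endomorphism N^a induces a well-defined R-linear map gr^M_a M → gr^M_{−a} M, and this induced map is an isomorphism. -/
section Aux

variable {R M : Type*} [CommRing R] [AddCommGroup M] [Module R M] (N : M →ₗ[R] M)

lemma mem_filKer {b : ℤ} {x : M} : x ∈ filKer N b ↔ (N ^ (b + 1).toNat) x = 0 :=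
  LinearMap.mem_ker

lemma mem_filRange {c : ℤ} {x : M} : x ∈ filRange N c ↔ ∃ y, (N ^ c.toNat) y = x :=
  LinearMap.mem_range

lemma kerPow_mono {m n : ℕ} (h : m ≤ n) :
    LinearMap.ker (N ^ m) ≤ LinearMap.ker (N ^ n) := by
  intro x hx
  rw [LinearMap.mem_ker] at hx ⊢
  have hpow : N ^ n = N ^ (n - m) * N ^ m := by
    rw [← pow_add]
    congr 1
    omega
  rw [hpow, Module.End.mul_apply, hx, map_zero]

lemma rangePow_anti {m n : ℕ} (h : m ≤ n) :
    LinearMap.range (N ^ n) ≤ LinearMap.range (N ^ m) := by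
  rintro x ⟨y, rfl⟩
  have hpow : N ^ n = N ^ m * N ^ (n - m) := by
    rw [← pow_add]
    congr 1
    omega
  exact ⟨(N ^ (n - m)) y, by rw [hpow, Module.End.mul_apply]⟩

lemma le_filMonodromy {b c a : ℤ} (h : b - c = a) :
    filKer N b ⊓ filRange N c ≤ filMonodromy N a :=
  le_iSup_of_le b <| le_iSup_of_le c <| le_iSup_of_le h le_rfl

lemma filMonodromy_le {a : ℤ} {S : Submodule R M}
    (h : ∀ b c : ℤ, b - c = a → filKer N b ⊓ filRange N c ≤ S) :
    filMonodromy N a ≤ S :=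
  iSup_le fun b => iSup_le fun c => iSup_le fun hbc => h b c hbc

lemma N_map_filMonodromy (a : ℤ) :
    ∀ x ∈ filMonodromy N a, N x ∈ filMonodromy N (a - 2) := by
  have hle : filMonodromy N a ≤ Submodule.comap N (filMonodromy N (a - 2)) := by
    apply filMonodromy_le
    rintro b c hbc x ⟨hk, hr⟩
    refine Submodule.mem_comap.mpr
      (le_filMonodromy N (b := b - 1) (c := c + 1) (by omega) ⟨?_, ?_⟩)
    · rw [SetLike.mem_coe, mem_filKer, ← Module.End.mul_apply, ← pow_succ]
      have := kerPow_mono N (show (b + 1).toNat ≤ (b - 1 + 1).toNat + 1 by omega) hk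
      rwa [LinearMap.mem_ker] at this
    · obtain ⟨w, hw⟩ := (mem_filRange N).mp hr
      exact rangePow_anti N (n := c.toNat + 1)
        (show (c + 1).toNat ≤ c.toNat + 1 by omega)
        ⟨w, by rw [pow_succ', Module.End.mul_apply, hw]⟩
  exact fun x hx => hle hx

lemma pow_map_filMonodromy (n : ℕ) (a : ℤ) :
    ∀ x ∈ filMonodromy N a, (N ^ n) x ∈ filMonodromy N (a - 2 * n) := by
  induction n generalizing a with
  | zero =>
      intro x hx
      simpa using hx
  | succ n ih =>
      intro x hx
      have h2 := ih (a - 2) (N x) (N_map_filMonodromy N a x hx)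
      have hpow : (N ^ (n + 1)) x = (N ^ n) (N x) := by
        rw [pow_succ, Module.End.mul_apply]
      have heq : a - 2 - 2 * (n : ℤ) = a - 2 * ((n : ℤ) + 1) := by ring
      rw [heq] at h2
      have hcast : ((n + 1 : ℕ) : ℤ) = (n : ℤ) + 1 := by push_cast; ring
      rw [hpow, hcast]
      exact h2

lemma key_filMonodromy (a t : ℤ) (ha : 0 ≤ a) (ht : 0 ≤ t) :
    filMonodromy N (-a - t) ≤ Submodule.map (N ^ a.toNat) (filMonodromy N (a - t)) := by
  apply filMonodromy_le
  rintro b c hbc x ⟨hk, hr⟩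
  rcases le_or_gt b (-1) with hb | hb
  · have h0 : (b + 1).toNat = 0 := by omega
    rw [SetLike.mem_coe, mem_filKer, h0, pow_zero, Module.End.one_apply] at hk
    rw [hk]
    exact Submodule.zero_mem _
  · obtain ⟨y, hy⟩ := (mem_filRange N).mp hr
    refine Submodule.mem_map.mpr ⟨(N ^ (c - a).toNat) y, ?_, ?_⟩
    · refine le_filMonodromy N (b := c - t) (c := c - a) (by omega) ⟨?_, ?_⟩
      · rw [SetLike.mem_coe, mem_filKer, ← Module.End.mul_apply, ← pow_add]
        have hk' : (N ^ ((b + 1).toNat + c.toNat)) y = 0 := by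
          rw [pow_add, Module.End.mul_apply, hy]
          exact (mem_filKer N).mp (SetLike.mem_coe.mp hk)
        have heq : (c - t + 1).toNat + (c - a).toNat = (b + 1).toNat + c.toNat := by omega
        rw [heq]
        exact hk'
      · exact (mem_filRange N).mpr ⟨y, rfl⟩
    · rw [← Module.End.mul_apply, ← pow_add]
      have heq : a.toNat + (c - a).toNat = c.toNat := by omega
      rw [heq]
      exact hy

end Aux

/-- `N` maps `fil^M_a M` into `fil^M_{a−2} M` for every integer `a`; consequently, for every
`a ≥ 0` the endomorphism `N^a` induces a well-defined map `gr^M_a M → gr^M_{−a} M`, and this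
induced map is an isomorphism. -/
theorem statement6 {R M : Type*} [CommRing R] [AddCommGroup M] [Module R M]
    (N : M →ₗ[R] M) (hN : IsNilpotent N) :
    (∀ a : ℤ, ∀ x ∈ filMonodromy N a, N x ∈ filMonodromy N (a - 2)) ∧
    (∀ a : ℤ, 0 ≤ a →
      ∃ h1 : ∀ x ∈ filMonodromy N a, (N ^ a.toNat) x ∈ filMonodromy N (-a),
      ∃ e : grM N a ≃ₗ[R] grM N (-a),
        ∀ x : ↥(filMonodromy N a),
          e (Submodule.Quotient.mk x)
            = Submodule.Quotient.mk
                (⟨(N ^ a.toNat) x.1, h1 x.1 x.2⟩ : ↥(filMonodromy N (-a)))) := by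
  constructor
  · exact N_map_filMonodromy N
  · intro a ha
    -- the two well-definedness statements
    have h1 : ∀ x ∈ filMonodromy N a, (N ^ a.toNat) x ∈ filMonodromy N (-a) := by
      intro x hx
      have h := pow_map_filMonodromy N a.toNat a x hx
      have heq : a - 2 * (a.toNat : ℤ) = -a := by omega
      rwa [heq] at h
    have h1' : ∀ x ∈ filMonodromy N (a - 1), (N ^ a.toNat) x ∈ filMonodromy N (-a - 1) := by
      intro x hx
      have h := pow_map_filMonodromy N a.toNat (a - 1) x hx
      have heq : a - 1 - 2 * (a.toNat : ℤ) = -a - 1 := by omega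
      rwa [heq] at h
    have key0 : filMonodromy N (-a) ≤
        Submodule.map (N ^ a.toNat) (filMonodromy N a) := by
      have h := key_filMonodromy N a 0 ha le_rfl
      simpa using h
    have key1 : filMonodromy N (-a - 1) ≤
        Submodule.map (N ^ a.toNat) (filMonodromy N (a - 1)) :=
      key_filMonodromy N a 1 ha zero_le_one
    refine ⟨h1, ?_⟩
    set p : Submodule R ↥(filMonodromy N a) :=
      (filMonodromy N (a - 1)).comap (filMonodromy N a).subtype with hp
    set q : Submodule R ↥(filMonodromy N (-a)) :=
      (filMonodromy N (-a - 1)).comap (filMonodromy N (-a)).subtype with hq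
    let f : ↥(filMonodromy N a) →ₗ[R] ↥(filMonodromy N (-a)) :=
      (N ^ a.toNat).restrict h1
    let g : ↥(filMonodromy N a) →ₗ[R] grM N (-a) := q.mkQ.comp f
    have hker : p ≤ LinearMap.ker g := by
      intro x hx
      rw [LinearMap.mem_ker]
      show q.mkQ (f x) = 0
      rw [Submodule.mkQ_apply, Submodule.Quotient.mk_eq_zero]
      show (N ^ a.toNat) x.1 ∈ filMonodromy N (-a - 1)
      exact h1' x.1 hx
    let e0 : grM N a →ₗ[R] grM N (-a) := p.liftQ g hker
    have hsurj : Function.Surjective e0 := by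
      intro w
      obtain ⟨u, rfl⟩ := Submodule.Quotient.mk_surjective q w
      obtain ⟨z, hzF, hze⟩ := Submodule.mem_map.mp (key0 u.2)
      refine ⟨Submodule.Quotient.mk ⟨z, hzF⟩, ?_⟩
      show p.liftQ g hker (Submodule.Quotient.mk ⟨z, hzF⟩) = Submodule.Quotient.mk u
      rw [Submodule.liftQ_apply]
      show q.mkQ (f ⟨z, hzF⟩) = Submodule.Quotient.mk u
      have hfz : f ⟨z, hzF⟩ = u := Subtype.ext hze
      rw [hfz, Submodule.mkQ_apply]
    have hinj : Function.Injective e0 := by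
      rw [← LinearMap.ker_eq_bot, eq_bot_iff]
      intro w hw
      rw [LinearMap.mem_ker] at hw
      obtain ⟨v, rfl⟩ := Submodule.Quotient.mk_surjective p w
      rw [Submodule.liftQ_apply] at hw
      replace hw : f v ∈ q := by
        have : q.mkQ (f v) = 0 := hw
        rwa [Submodule.mkQ_apply, Submodule.Quotient.mk_eq_zero] at this
      have hv : (N ^ a.toNat) v.1 ∈ filMonodromy N (-a - 1) := hw
      obtain ⟨z, hzF, hze⟩ := Submodule.mem_map.mp (key1 hv)
      have hsub : v.1 - z ∈ filMonodromy N (a - 1) := by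
        refine le_filMonodromy N (b := a - 1) (c := 0) (by ring) ⟨?_, ?_⟩
        · rw [SetLike.mem_coe, mem_filKer]
          have heq : (a - 1 + 1).toNat = a.toNat := by omega
          rw [heq, map_sub, hze, sub_self]
        · refine (mem_filRange N).mpr ⟨v.1 - z, ?_⟩
          simp
      have hv1 : v.1 ∈ filMonodromy N (a - 1) := by
        have := add_mem hzF hsub
        simpa using this
      rw [Submodule.mem_bot, Submodule.Quotient.mk_eq_zero]
      exact hv1
    refine ⟨LinearEquiv.ofBijective e0 ⟨hinj, hsurj⟩, fun x => ?_⟩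
    show e0 (Submodule.Quotient.mk x) = _
    rw [Submodule.liftQ_apply]
    show q.mkQ (f x) = _
    rw [Submodule.mkQ_apply]
    congr 1
end

section
/- Let φ : M → M' be an R-linear map intertwining the nilpotent operators, i.e. φ ∘ N = N' ∘ φ, and assume φ is strict with respect to the monodromy filtrations: φ(fil^M_a M) = fil^M_a M' ∩ range(φ) for every integer a. Then the monodromy filtration of the kernel and of the cokernel is the induced subspace and quotient filtration. Precisely: N restricts to a nilpotent endomorphism of ker(φ) and the monodromy filtration of (ker(φ), N|_{ker(φ)}) satisfies fil^M_a(ker φ) = fil^M_a M ∩ ker(φ) for every integer a; and N' descends to a nilpotent endomorphism of M'/range(φ) and the monodromy filtration of (M'/range(φ), induced N') equals, for every integer a, the image of fil^M_a M' under the quotient map M' → M'/range(φ). -/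
/-!
Two facts about the monodromy filtration `F` of any `(M, N)` carry the proof; neither needs
nilpotency. First, `F_{-c} ⊆ N^c F_c`, straight from the definition. Second, if
`N^a x ∈ F_{-a-1}` then `x ∈ F_{a-1}`: write `N^a x = N^{a+1} w` with `w ∈ F_{a+1}`; then
`N w ∈ F_{a-1}` and `x - N w ∈ ker N^a ⊆ F_{a-1}`.

Consequently, for a filtration `G` with `N G_a ⊆ G_{a-2}`, we get `F ⊆ G` as soon as `G` is
exhaustive and `N^a : gr_a G → gr_{-a} G` is injective, and `G ⊆ F` as soon as `G` is separated
and these maps are surjective. The filtrations induced on `ker φ` and `M'/im φ` compare with the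
monodromy filtrations in one direction by functoriality; strictness of `φ` supplies the
surjectivity, resp. injectivity, needed for the other.
-/

section MonodromyFiltration

variable {R M : Type*} [CommRing R] [AddCommGroup M] [Module R M] {N : M →ₗ[R] M}

open LinearMap Submodule

theorem ker_pow_inf_range_pow_le_filMonodromy (b m : ℕ) :
    ker (N ^ (b + 1)) ⊓ range (N ^ m) ≤ filMonodromy N (b - m) := by
  refine le_iSup_of_le (b : ℤ) (le_iSup_of_le (m : ℤ) (le_iSup_of_le rfl ?_))
  simp only [filKer, filRange, Int.toNat_natCast]
  exact le_rfl

theorem filMonodromy_le_iff {a : ℤ} {P : Submodule R M} :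
    filMonodromy N a ≤ P ↔
      ∀ b m : ℕ, (b : ℤ) - m = a → ker (N ^ (b + 1)) ⊓ range (N ^ m) ≤ P := by
  refine ⟨fun h b m hbm => (ker_pow_inf_range_pow_le_filMonodromy b m).trans (hbm ▸ h),
    fun h => iSup₂_le fun b c => iSup_le fun hbc => ?_⟩
  rcases lt_or_ge b 0 with hb | hb
  · simp [filKer, show (b + 1).toNat = 0 by omega, Module.End.one_eq_id]
  rcases lt_or_ge c 0 with hc | hc
  · calc filKer N b ⊓ filRange N c
        _ ≤ ker (N ^ ((b - c).toNat + 1)) ⊓ range (N ^ 0) := by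
          refine le_inf (inf_le_left.trans fun x hx => ?_) (by simp [Module.End.one_eq_id])
          exact Module.End.pow_map_zero_of_le (by omega) hx
        _ ≤ P := h _ 0 (by omega)
  · refine le_trans ?_ (h b.toNat c.toNat (by omega))
    rw [filKer, filRange, show (b + 1).toNat = b.toNat + 1 by omega]


theorem ker_pow_le_filMonodromy (n : ℕ) : ker (N ^ n) ≤ filMonodromy N (n - 1) := by
  cases n with
  | zero => simp [Module.End.one_eq_id]
  | succ b =>
    simpa [Module.End.one_eq_id] using ker_pow_inf_range_pow_le_filMonodromy (N := N) b 0

theorem filMonodromy_mono : Monotone (filMonodromy N) := fun a a' h =>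
  filMonodromy_le_iff.2 fun b m hbm =>
    (inf_le_inf_right _ fun x hx => Module.End.pow_map_zero_of_le (by omega) hx).trans
      (ker_pow_inf_range_pow_le_filMonodromy (b + (a' - a).toNat) m |>.trans_eq
        (by congr 1; omega))

theorem filMonodromy_le_comap (a : ℤ) :
    filMonodromy N a ≤ (filMonodromy N (a - 2)).comap N := by
  refine filMonodromy_le_iff.2 fun b m hbm => ?_
  rintro _ ⟨hx, y, rfl⟩
  rw [SetLike.mem_coe, mem_ker, ← Module.End.mul_apply, ← pow_add] at hx
  rw [mem_comap, ← Module.End.mul_apply, ← pow_succ']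
  cases b with
  | zero => rw [add_comm, hx]; exact zero_mem _
  | succ b =>
    refine ker_pow_inf_range_pow_le_filMonodromy b (m + 1) |>.trans_eq (by congr 1; omega)
      ⟨?_, y, rfl⟩
    rw [SetLike.mem_coe, mem_ker, ← Module.End.mul_apply, ← pow_add, ← hx]
    ring_nf

theorem filMonodromy_neg_le_map_pow (c : ℕ) :
    filMonodromy N (-c) ≤ (filMonodromy N c).map (N ^ c) := by
  refine filMonodromy_le_iff.2 fun b m hbm => ?_
  obtain rfl : m = b + c := by omega
  rintro x ⟨hx, y, rfl⟩
  refine ⟨(N ^ b) y, ker_pow_inf_range_pow_le_filMonodromy (b + c) b |>.trans_eq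
    (by congr 1; omega) ⟨?_, y, rfl⟩, ?_⟩
  · rw [SetLike.mem_coe, mem_ker, ← Module.End.mul_apply, ← pow_add] at hx ⊢
    rwa [show b + c + 1 + b = b + 1 + (b + c) by omega]
  · rw [← Module.End.mul_apply, ← pow_add, add_comm]

theorem comap_pow_filMonodromy_le (a : ℕ) :
    (filMonodromy N (-a - 1)).comap (N ^ a) ≤ filMonodromy N (a - 1) := by
  intro x hx
  have hsurj := filMonodromy_neg_le_map_pow (N := N) (a + 1)
  rw [show -((a + 1 : ℕ) : ℤ) = -a - 1 by push_cast; ring] at hsurj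
  obtain ⟨w, hw, hwx⟩ := hsurj hx
  have hNw : N w ∈ filMonodromy N (a - 1) := by
    have h := filMonodromy_le_comap _ hw
    rwa [show ((a + 1 : ℕ) : ℤ) - 2 = a - 1 by push_cast; ring] at h
  have hker : x - N w ∈ ker (N ^ a) := by
    rw [mem_ker, map_sub, ← Module.End.mul_apply, ← pow_succ, hwx, sub_self]
  simpa using add_mem (ker_pow_le_filMonodromy a hker) hNw

theorem filMonodromy_eq_top {k : ℕ} (hk : N ^ k = 0) {a : ℤ} (ha : k ≤ a + 1) :
    filMonodromy N a = ⊤ := by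
  refine eq_top_iff.2 (le_trans ?_ ((ker_pow_le_filMonodromy (a + 1).toNat).trans_eq
    (by congr 1; omega)))
  rw [pow_eq_zero_of_le (by omega) hk, ker_zero]

theorem filMonodromy_eq_bot {k : ℕ} (hk : N ^ k = 0) {a : ℤ} (ha : a ≤ -k) :
    filMonodromy N a = ⊥ :=
  eq_bot_iff.2 <| filMonodromy_le_iff.2 fun b m hbm => inf_le_right.trans <| by
    rw [pow_eq_zero_of_le (by omega) hk, range_zero]

theorem map_filMonodromy_le {M' : Type*} [AddCommGroup M'] [Module R M'] {N' : M' →ₗ[R] M'}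
    (f : M →ₗ[R] M') (hf : N'.comp f = f.comp N) (a : ℤ) :
    (filMonodromy N a).map f ≤ filMonodromy N' a := by
  have hpow k x : (N' ^ k) (f x) = f ((N ^ k) x) :=
    LinearMap.congr_fun (Module.End.commute_pow_left_of_commute hf k) x
  refine map_le_iff_le_comap.2 <| filMonodromy_le_iff.2 fun b m hbm => ?_
  rintro _ ⟨hx, y, rfl⟩
  refine hbm ▸ ker_pow_inf_range_pow_le_filMonodromy b m ⟨?_, f y, hpow m y⟩
  rw [SetLike.mem_coe, mem_ker] at hx ⊢
  rw [hpow, hx, map_zero]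

section Characterization

variable {G : ℤ → Submodule R M}

theorem le_comap_pow_of_le_comap (hG : ∀ a, G a ≤ (G (a - 2)).comap N) (c : ℕ) (a : ℤ) :
    G a ≤ (G (a - 2 * c)).comap (N ^ c) := by
  induction c with
  | zero => simp [Module.End.one_eq_id]
  | succ c ih =>
    rw [pow_succ', Module.End.mul_eq_comp, comap_comp]
    refine ih.trans (comap_mono ((hG _).trans_eq ?_))
    congr 2; push_cast; ring

theorem ker_pow_le_of_pow_injective
    (hinj : ∀ a : ℕ, G a ⊓ (G (-a - 1)).comap (N ^ a) ≤ G (a - 1))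
    {t : ℤ} (htop : ∀ a ≥ t, G a = ⊤) (n : ℕ) : ker (N ^ n) ≤ G (n - 1) := by
  -- descending induction on `a`, where `j` bounds the distance to the region `G = ⊤`
  suffices h : ∀ j a : ℕ, n ≤ a → t ≤ a - 1 + j → ker (N ^ n) ≤ G (a - 1) from
    h (t - n + 1).toNat n le_rfl (by omega)
  intro j
  induction j with
  | zero => intro a _ ha; rw [htop _ (by simpa using ha)]; exact le_top
  | succ j ih =>
    intro a hna ha x hx
    have hx' : x ∈ G a := by simpa using ih (a + 1) (by omega) (by push_cast; omega) hx
    refine hinj a ⟨hx', ?_⟩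
    rw [SetLike.mem_coe, mem_comap, Module.End.pow_map_zero_of_le hna hx]
    exact zero_mem _

theorem filMonodromy_le_of_pow_injective (hmap : ∀ a, G a ≤ (G (a - 2)).comap N)
    (hinj : ∀ a : ℕ, G a ⊓ (G (-a - 1)).comap (N ^ a) ≤ G (a - 1))
    {t : ℤ} (htop : ∀ a ≥ t, G a = ⊤) (a : ℤ) : filMonodromy N a ≤ G a := by
  refine filMonodromy_le_iff.2 fun b m hbm => ?_
  rintro _ ⟨hx, y, rfl⟩
  have hy : y ∈ ker (N ^ (b + m + 1)) := by
    rw [SetLike.mem_coe, mem_ker, ← Module.End.mul_apply, ← pow_add] at hx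
    rwa [mem_ker, add_right_comm]
  have h := le_comap_pow_of_le_comap hmap m _ (ker_pow_le_of_pow_injective hinj htop _ hy)
  rwa [show ((b + m + 1 : ℕ) : ℤ) - 1 - 2 * m = a by push_cast; omega] at h

theorem le_filMonodromy_of_pow_surjective (hmap : ∀ a, G a ≤ (G (a - 2)).comap N)
    (hsurj : ∀ c : ℕ, G (-c) ≤ (G c).map (N ^ c) ⊔ G (-c - 1))
    {s : ℤ} (hbot : ∀ a ≤ s, G a = ⊥) (a : ℤ) : G a ≤ filMonodromy N a := by
  have pos (n : ℕ) (h : G (-n - 2) ≤ filMonodromy N (-n - 2)) : G n ≤ filMonodromy N n := by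
    have h₁ := le_comap_pow_of_le_comap hmap (n + 1) n
    have h₂ := comap_pow_filMonodromy_le (N := N) (n + 1)
    rw [show (n : ℤ) - 2 * ↑(n + 1) = -n - 2 by push_cast; ring] at h₁
    rw [show -((n + 1 : ℕ) : ℤ) - 1 = -n - 2 by push_cast; ring,
      show ((n + 1 : ℕ) : ℤ) - 1 = n by push_cast; ring] at h₂
    exact h₁.trans ((comap_mono h).trans h₂)
  have neg (j c : ℕ) (hc : -(c : ℤ) - j ≤ s) : G (-c) ≤ filMonodromy N (-c) := by
    induction j generalizing c with
    | zero => rw [hbot _ (by simpa using hc)]; exact bot_le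
    | succ j ih =>
      have h₁ := ih (c + 1) (by push_cast at hc ⊢; omega)
      have h₂ := ih (c + 2) (by push_cast at hc ⊢; omega)
      rw [show -((c + 1 : ℕ) : ℤ) = -c - 1 by push_cast; ring] at h₁
      rw [show -((c + 2 : ℕ) : ℤ) = -c - 2 by push_cast; ring] at h₂
      have hN : (filMonodromy N c).map (N ^ c) ≤ filMonodromy N (-c) := by
        rw [map_le_iff_le_comap]
        simpa [two_mul] using le_comap_pow_of_le_comap filMonodromy_le_comap c c
      exact (hsurj c).trans (sup_le ((map_mono (pos c h₂)).trans hN)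
        (h₁.trans (filMonodromy_mono (by omega))))
  rcases le_or_gt 0 a with ha | ha
  · lift a to ℕ using ha
    have h := neg (-s).toNat (a + 2) (by omega)
    rw [show -((a + 2 : ℕ) : ℤ) = -a - 2 by push_cast; ring] at h
    exact pos a h
  · obtain ⟨c, rfl⟩ : ∃ c : ℕ, a = -c := ⟨(-a).toNat, by omega⟩
    exact neg (-s).toNat c (by omega)

end Characterization

section Strict

variable {M' : Type*} [AddCommGroup M'] [Module R M'] {N' : M' →ₗ[R] M'} {φ : M →ₗ[R] M'}

theorem filMonodromy_restrict_ker (hN : IsNilpotent N) (hφ : N'.comp φ = φ.comp N)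
    (hstrict : ∀ a, (filMonodromy N a).map φ = filMonodromy N' a ⊓ range φ)
    (hker : ∀ x ∈ ker φ, N x ∈ ker φ) (a : ℤ) :
    filMonodromy (N.restrict hker) a = (filMonodromy N a).comap (ker φ).subtype := by
  obtain ⟨k, hk⟩ := hN
  have hφpow c x : (N' ^ c) (φ x) = φ ((N ^ c) x) :=
    LinearMap.congr_fun (Module.End.commute_pow_left_of_commute hφ c) x
  have hpow c (z : ker φ) : (((N.restrict hker) ^ c) z : M) = (N ^ c) z := by
    rw [Module.End.pow_restrict]; rfl
  refine le_antisymm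
    (map_le_iff_le_comap.1 (map_filMonodromy_le (ker φ).subtype (LinearMap.ext fun _ => rfl) a))
    (le_filMonodromy_of_pow_surjective (G := fun a => (filMonodromy N a).comap (ker φ).subtype)
      (fun a x hx => filMonodromy_le_comap a hx) ?_ (s := -k)
      (fun a ha => by simp [filMonodromy_eq_bot hk ha]) a)
  intro c x (hx : (x : M) ∈ filMonodromy N (-c))
  obtain ⟨y, hy, hyx⟩ := filMonodromy_neg_le_map_pow c hx
  have hφy : φ y ∈ filMonodromy N' (c - 1) :=
    ker_pow_le_filMonodromy c (by rw [mem_ker, hφpow, hyx]; exact x.2)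
  obtain ⟨w, hw, hwy⟩ := (hstrict (c - 1)).ge ⟨hφy, y, rfl⟩
  have hz : y - w ∈ ker φ := by simp [hwy]
  refine mem_sup.2 ⟨_, ⟨⟨y - w, hz⟩, sub_mem hy (filMonodromy_mono (by omega) hw), rfl⟩,
    x - _, ?_, add_sub_cancel _ _⟩
  change (x : M) - _ ∈ filMonodromy N (-c - 1)
  rw [hpow, map_sub, hyx, sub_sub_cancel]
  have h := le_comap_pow_of_le_comap filMonodromy_le_comap c _ hw
  rwa [show (c : ℤ) - 1 - 2 * c = -c - 1 by ring] at h

theorem filMonodromy_mapQ_range (hN' : IsNilpotent N') (hφ : N'.comp φ = φ.comp N)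
    (hstrict : ∀ a, (filMonodromy N a).map φ = filMonodromy N' a ⊓ range φ)
    (hcoker : range φ ≤ (range φ).comap N') (a : ℤ) :
    filMonodromy ((range φ).mapQ (range φ) N' hcoker) a
      = (filMonodromy N' a).map (range φ).mkQ := by
  obtain ⟨k, hk⟩ := hN'
  have hφpow c x : (N' ^ c) (φ x) = φ ((N ^ c) x) :=
    LinearMap.congr_fun (Module.End.commute_pow_left_of_commute hφ c) x
  refine le_antisymm (filMonodromy_le_of_pow_injective
      (G := fun a => (filMonodromy N' a).map (range φ).mkQ) ?_ ?_ (t := k)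
      (fun a ha => by rw [filMonodromy_eq_top hk (by omega), Submodule.map_top, range_mkQ]) a)
    (map_filMonodromy_le (range φ).mkQ (LinearMap.ext fun _ => rfl) a)
  · rintro a _ ⟨x, hx, rfl⟩
    exact ⟨N' x, filMonodromy_le_comap a hx, rfl⟩
  rintro c _ ⟨⟨x, hx, rfl⟩, u, hu, hux⟩
  rw [mkQ_apply, mkQ_apply, ← mapQ_pow, mapQ_apply, Submodule.Quotient.eq] at hux
  obtain ⟨m, hm⟩ : (N' ^ c) x - u ∈ range φ := by simpa using neg_mem hux
  have hφm : φ m ∈ filMonodromy N' (-c) := by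
    have h := le_comap_pow_of_le_comap filMonodromy_le_comap c _ hx
    rw [show (c : ℤ) - 2 * c = -c by ring] at h
    exact hm ▸ sub_mem h (filMonodromy_mono (by omega) hu)
  obtain ⟨m', hm', hm'φ⟩ := (hstrict (-c)).ge ⟨hφm, m, rfl⟩
  obtain ⟨y, -, rfl⟩ := filMonodromy_neg_le_map_pow c hm'
  refine ⟨x - φ y, comap_pow_filMonodromy_le c ?_, ?_⟩
  · rw [mem_comap, map_sub, hφpow, hm'φ, hm, sub_sub_cancel]
    exact hu
  · simp [(Submodule.Quotient.mk_eq_zero _).2 (mem_range_self φ y)]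

end Strict

end MonodromyFiltration

/-- If `φ : (M,N) → (M',N')` intertwines the nilpotent operators and is strict with respect
to the monodromy filtrations, then `N` restricts to a nilpotent endomorphism of `ker φ`
whose monodromy filtration is the subspace filtration induced by `fil^M N`, and `N'`
descends to a nilpotent endomorphism of `M'/range φ` whose monodromy filtration is the
quotient filtration induced by `fil^M N'`. -/
theorem statement8 {R M M' : Type*} [CommRing R] [AddCommGroup M] [Module R M]
    [AddCommGroup M'] [Module R M']
    (N : M →ₗ[R] M) (N' : M' →ₗ[R] M') (hN : IsNilpotent N) (hN' : IsNilpotent N')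
    (φ : M →ₗ[R] M') (hcomm : ∀ x : M, φ (N x) = N' (φ x))
    (hstrict : ∀ a : ℤ,
      Submodule.map φ (filMonodromy N a) = filMonodromy N' a ⊓ LinearMap.range φ) :
    (∃ hker : ∀ x ∈ LinearMap.ker φ, N x ∈ LinearMap.ker φ,
      IsNilpotent (N.restrict hker) ∧
      ∀ a : ℤ, filMonodromy (N.restrict hker) a
        = (filMonodromy N a).comap (LinearMap.ker φ).subtype) ∧
    (∃ hcoker : LinearMap.range φ ≤ (LinearMap.range φ).comap N',
      IsNilpotent (Submodule.mapQ (LinearMap.range φ) (LinearMap.range φ) N' hcoker) ∧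
      ∀ a : ℤ, filMonodromy (Submodule.mapQ (LinearMap.range φ) (LinearMap.range φ) N' hcoker) a
        = (filMonodromy N' a).map (LinearMap.range φ).mkQ) := by
  have hφ : N'.comp φ = φ.comp N := LinearMap.ext fun x => (hcomm x).symm
  have hker : ∀ x ∈ LinearMap.ker φ, N x ∈ LinearMap.ker φ := fun x hx => by
    rw [LinearMap.mem_ker] at hx ⊢
    rw [hcomm, hx, map_zero]
  have hcoker : LinearMap.range φ ≤ (LinearMap.range φ).comap N' := by
    rintro _ ⟨m, rfl⟩
    exact ⟨N m, hcomm m⟩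
  exact ⟨⟨hker, Module.End.isNilpotent.restrict hker hN,
      filMonodromy_restrict_ker hN hφ hstrict hker⟩,
    ⟨hcoker, Module.End.IsNilpotent.mapQ hcoker hN',
      filMonodromy_mapQ_range hN' hφ hstrict hcoker⟩⟩
end

section
/- For all integers a ≥ 0 and b ≥ 0, the endomorphism N^b maps fil_b M ∩ fil^a M into fil_0 M ∩ fil^{a+b} M and maps (fil_{b−1} M + fil^{a+1} M) ∩ fil_b M ∩ fil^a M into (fil_{−1} M + fil^{a+b+1} M) ∩ fil_0 M ∩ fil^{a+b} M, and the induced R-linear map gr^a_b M → gr^{a+b}_0 M is an isomorphism. -/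
/-- For `a, b ≥ 0`, `N^b` maps `fil_b M ∩ fil^a M` into `fil_0 M ∩ fil^{a+b} M` and
`(fil_{b−1} M + fil^{a+1} M) ∩ fil_b M ∩ fil^a M` into
`(fil_{−1} M + fil^{a+b+1} M) ∩ fil_0 M ∩ fil^{a+b} M`, and the induced map
`gr^a_b M → gr^{a+b}_0 M` is an isomorphism. -/
theorem statement9 {R M : Type*} [CommRing R] [AddCommGroup M] [Module R M]
    (N : M →ₗ[R] M) (hN : IsNilpotent N) :
    ∀ a b : ℤ, 0 ≤ a → 0 ≤ b →
      ∃ h1 : ∀ x ∈ filKer N b ⊓ filRange N a,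
          (N ^ b.toNat) x ∈ filKer N 0 ⊓ filRange N (a + b),
        (∀ x ∈ (filKer N (b - 1) ⊔ filRange N (a + 1)) ⊓ (filKer N b ⊓ filRange N a),
          (N ^ b.toNat) x ∈
            (filKer N (-1) ⊔ filRange N (a + b + 1)) ⊓ (filKer N 0 ⊓ filRange N (a + b))) ∧
        ∃ e : grBC N a b ≃ₗ[R] grBC N (a + b) 0,
          ∀ x : ↥(filKer N b ⊓ filRange N a),
            e (Submodule.Quotient.mk x)
              = Submodule.Quotient.mk
                  (⟨(N ^ b.toNat) x.1, h1 x.1 x.2⟩ : ↥(filKer N 0 ⊓ filRange N (a + b))) := by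
  intro a b ha hb
  lift a to ℕ using ha
  lift b to ℕ using hb
  have e1 : ((b:ℤ)+1).toNat = b+1 := by omega
  have e2 : ((b:ℤ)-1+1).toNat = b := by omega
  have e3 : ((0:ℤ)+1).toNat = 1 := by omega
  have e4 : ((-1:ℤ)+1).toNat = 0 := by omega
  have e5 : ((a:ℤ)).toNat = a := by omega
  have e5b : ((b:ℤ)).toNat = b := by omega
  have e6 : ((a:ℤ)+1).toNat = a+1 := by omega
  have e7 : ((a:ℤ)+(b:ℤ)).toNat = a+b := by omega
  have e8 : ((a:ℤ)+(b:ℤ)+1).toNat = a+b+1 := by omega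
  have E1 : filKer N (b:ℤ) = LinearMap.ker (N ^ (b+1)) := by rw [filKer, e1]
  have E2 : filKer N ((b:ℤ)-1) = LinearMap.ker (N ^ b) := by rw [filKer, e2]
  have E3 : filKer N 0 = LinearMap.ker (N ^ 1) := by rw [filKer, e3]
  have E4 : filKer N (-1) = LinearMap.ker (N ^ 0) := by rw [filKer, e4]
  have F1 : filRange N (a:ℤ) = LinearMap.range (N ^ a) := by rw [filRange, e5]
  have F2 : filRange N ((a:ℤ)+1) = LinearMap.range (N ^ (a+1)) := by rw [filRange, e6]
  have F3 : filRange N ((a:ℤ)+(b:ℤ)) = LinearMap.range (N ^ (a+b)) := by rw [filRange, e7]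
  have F4 : filRange N ((a:ℤ)+(b:ℤ)+1) = LinearMap.range (N ^ (a+b+1)) := by rw [filRange, e8]
  have G : (N ^ ((b:ℤ)).toNat) = N ^ b := by rw [e5b]
  have comp : ∀ (m n : ℕ) (x : M), (N ^ m) ((N ^ n) x) = (N ^ (m + n)) x := by
    intro m n x; rw [← Module.End.mul_apply, ← pow_add]
  set P : Submodule R M := filKer N (b:ℤ) ⊓ filRange N (a:ℤ) with hPdef
  set K : Submodule R M := filKer N 0 ⊓ filRange N ((a:ℤ)+(b:ℤ)) with hKdef
  have h1 : ∀ x ∈ P, (N ^ ((b:ℤ)).toNat) x ∈ K := by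
    intro x hx
    rw [hPdef, E1, F1] at hx
    obtain ⟨hk, y, rfl⟩ := hx
    have hk' : (N ^ (b+1)) ((N ^ a) y) = 0 := hk
    rw [comp] at hk'
    rw [hKdef, E3, F3, G]
    refine ⟨?_, ⟨y, ?_⟩⟩
    · show (N ^ 1) ((N ^ b) ((N ^ a) y)) = 0
      rw [comp, comp, show 1 + b + a = b + 1 + a from by ring]
      exact hk'
    · rw [comp, Nat.add_comm b a]
  have h2 : ∀ x ∈ (filKer N ((b:ℤ)-1) ⊔ filRange N ((a:ℤ)+1)) ⊓ P,
      (N ^ ((b:ℤ)).toNat) x ∈ (filKer N (-1) ⊔ filRange N ((a:ℤ)+(b:ℤ)+1)) ⊓ K := by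
    rintro x ⟨hs, hx⟩
    refine ⟨?_, h1 x hx⟩
    rw [E2, F2] at hs
    rw [E4, F4, G]
    obtain ⟨k, hk, w', ⟨w, rfl⟩, rfl⟩ := Submodule.mem_sup.1 hs
    have hk' : (N ^ b) k = 0 := hk
    have : (N ^ b) (k + (N ^ (a+1)) w) = (N ^ (a+b+1)) w := by
      rw [map_add, hk', zero_add, comp, show b + (a+1) = a+b+1 from by ring]
    exact Submodule.mem_sup_right ⟨w, this.symm⟩
  set S : Submodule R P := (filKer N ((b:ℤ)-1) ⊔ filRange N ((a:ℤ)+1)).comap P.subtype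
    with hSdef
  set T : Submodule R K := (filKer N (-1) ⊔ filRange N ((a:ℤ)+(b:ℤ)+1)).comap K.subtype
    with hTdef
  let f0 : P →ₗ[R] K := (N ^ ((b:ℤ)).toNat).restrict h1
  let f : P →ₗ[R] K ⧸ T := T.mkQ.comp f0
  have hf0 : ∀ x : P, (f0 x : M) = (N ^ ((b:ℤ)).toNat) x.1 := fun x => rfl
  have hmemf : ∀ x : P, f x = 0 ↔
      (N ^ b) (x : M) ∈ LinearMap.ker (N ^ 0) ⊔ LinearMap.range (N ^ (a+b+1)) := by
    intro x
    rw [show f x = T.mkQ (f0 x) from rfl, Submodule.mkQ_apply, Submodule.Quotient.mk_eq_zero,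
      hTdef, Submodule.mem_comap, Submodule.subtype_apply, hf0, G, E4, F4]
  have hSf : S ≤ LinearMap.ker f := by
    rintro x hmem
    rw [hSdef, Submodule.mem_comap, Submodule.subtype_apply, E2, F2] at hmem
    rw [LinearMap.mem_ker, hmemf]
    have := (h2 x.1 ⟨by rw [E2, F2]; exact hmem, x.2⟩).1
    rw [E4, F4, G] at this
    exact this
  have hfS : LinearMap.ker f ≤ S := by
    rintro ⟨x, hx⟩ hmem
    rw [LinearMap.mem_ker, hmemf] at hmem
    rw [pow_zero, Module.End.one_eq_id, LinearMap.ker_id, bot_sup_eq] at hmem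
    obtain ⟨w, hw⟩ := hmem
    rw [hSdef, Submodule.mem_comap, Submodule.subtype_apply, E2, F2]
    have hx1 : x - (N ^ (a+1)) w ∈ LinearMap.ker (N ^ b) := by
      rw [LinearMap.mem_ker, map_sub, comp, show b + (a+1) = a+b+1 from by ring, hw, sub_self]
    have hsplit : x = (x - (N ^ (a+1)) w) + (N ^ (a+1)) w := by abel
    show x ∈ LinearMap.ker (N ^ b) ⊔ LinearMap.range (N ^ (a+1))
    rw [hsplit]
    exact Submodule.add_mem_sup hx1 ⟨w, rfl⟩
  let e0 : (P ⧸ S) →ₗ[R] K ⧸ T := S.liftQ f hSf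
  have hker : LinearMap.ker e0 = ⊥ := Submodule.ker_liftQ_eq_bot _ _ _ hfS
  have hsurj : Function.Surjective e0 := by
    intro z
    obtain ⟨⟨z1, hz1⟩, rfl⟩ := Submodule.Quotient.mk_surjective _ z
    have hz1' := hz1
    rw [hKdef, E3, F3] at hz1'
    obtain ⟨hzk, w, hw⟩ := hz1'
    have hzk' : (N ^ 1) z1 = 0 := hzk
    have hxP : (N ^ a) w ∈ P := by
      rw [hPdef, E1, F1]
      refine ⟨?_, ⟨w, rfl⟩⟩
      show (N ^ (b+1)) ((N ^ a) w) = 0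
      rw [comp, show (b+1) + a = 1 + (a+b) from by ring, ← comp, hw]
      exact hzk'
    refine ⟨Submodule.Quotient.mk ⟨(N ^ a) w, hxP⟩, ?_⟩
    have hv : f0 ⟨(N ^ a) w, hxP⟩ = ⟨z1, hz1⟩ := by
      ext
      rw [hf0, G, comp, Nat.add_comm b a, hw]
    show f ⟨(N ^ a) w, hxP⟩ = _
    show T.mkQ (f0 ⟨(N ^ a) w, hxP⟩) = _
    rw [hv, Submodule.mkQ_apply]
  exact ⟨h1, h2, LinearEquiv.ofBijective e0 ⟨LinearMap.ker_eq_bot.1 hker, hsurj⟩,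
    fun x => rfl⟩
end
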